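/- Let h_q(t) = t^q/q + 1/t - (q+1)/q for t > 0, q > 1. Then (q+1)(h_q(t) + 1) ≥ t^q for all t > 0. -/
import Mathlib


/-- The function `h_q`. -/
noncomputable def hq (q t : ℝ) : ℝ := t ^ q / q + 1 / t - (q + 1) / q

/-- For `q > 1`, `(q+1)(h_q(t) + 1) ≥ t^q` for all `t > 0`. -/
theorem stmt5 (q : ℝ) (hq1 : 1 < q) :
    ∀ t : ℝ, 0 < t → t ^ q ≤ (q + 1) * (hq q t + 1) := by
  intro t ht
  have hq0 : (0:ℝ) < q := by linarith
  have hb : 1 + (q+1)*(t-1) ≤ t ^ (q+1) := by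
    have h := one_add_mul_self_le_rpow_one_add (s := t-1) (by linarith) (p := q+1)
      (by linarith)
    simpa using h
  have hts : t ^ (q+1) = t ^ q * t := by
    rw [Real.rpow_add ht, Real.rpow_one]
  have key : 0 ≤ t ^ q * t + q*(q+1) - (q+1)*t := by nlinarith
  rw [← sub_nonneg]
  have hrw : (q + 1) * (hq q t + 1) - t ^ q
      = (t ^ q * t + q*(q+1) - (q+1)*t) / (q * t) := by
    unfold hq
    field_simp
    ring
  rw [hrw]
  positivity
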